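/- arXiv:2503.08494 — 3 statements merged into one kernel-verified Lean document; each statement's English description precedes it below -/
import Mathlib

section
/- Let (Ω, F, (F_k)_{k≥0}, P) be a filtered probability space. Let {p_k}, {a_k}, {b_k} be nonnegative integrable random sequences adapted to (F_k), and let {q_k} be a deterministic nonnegative scalar sequence, such that ∑_{k=0}^∞ a_k < ∞ almost surely, ∑_{k=0}^∞ q_k = ∞, ∑_{k=0}^∞ b_k < ∞ almost surely, and for all k ≥ 0, E[p_{k+1} | F_k] ≤ (1 + a_k − q_k)p_k + b_k almost surely. Then lim_{k→∞} p_k = 0 and ∑_{k=0}^∞ q_k p_k < ∞ hold almost surely. -/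
/-!
Discounting by `∏_{j<k} (1 + a_j)` turns the recursion into a supermartingale
`Y_k = α_k p_k + ∑_{j<k} α_{j+1} (q_j p_j - b_j)`, `α_k = (∏_{j<k} (1 + a_j))⁻¹`, which is
bounded below by `-∑_{j<k} b_j`. Stopped when the partial sums of `b` first exceed `c`, it is
bounded below by `-c` and hence converges a.s.; on `{∑ b ≤ c}` it is never stopped, so `Y`
converges a.s. on `{∑ b < ∞}`. Pathwise, since `∏ (1 + a_j)` converges, the convergence of `Y`
forces `∑ q_j p_j < ∞` and the convergence of `p_k`, and the limit is `0` because `∑ q_j = ∞`.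
-/

open MeasureTheory Filter Finset
open scoped Topology

namespace MeasureTheory

variable {Ω : Type*} {m0 : MeasurableSpace Ω} {μ : Measure Ω} {F : Filtration ℕ m0}
  {f b : ℕ → Ω → ℝ}

theorem Supermartingale.stoppedProcess [IsFiniteMeasure μ] (hf : Supermartingale f F μ)
    {τ : Ω → ℕ∞} (hτ : IsStoppingTime F τ) : Supermartingale (stoppedProcess f τ) F μ := by
  have h := (hf.neg.stoppedProcess hτ).neg
  erw [stoppedProcess_neg, neg_neg] at h
  exact h

theorem Supermartingale.exists_ae_tendsto_of_forall_ge [IsFiniteMeasure μ]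
    (hf : Supermartingale f F μ) {c : ℝ} (hc : ∀ n ω, c ≤ f n ω) :
    ∀ᵐ ω ∂μ, ∃ l, Tendsto (f · ω) atTop (𝓝 l) := by
  have hbdd : ∀ n, eLpNorm ((-f) n) 1 μ ≤
      (∫ ω, f 0 ω ∂μ + 2 * |c| * μ.real Set.univ).toNNReal := fun n => by
    rw [Pi.neg_apply, eLpNorm_neg, eLpNorm_one_eq_lintegral_enorm,
      ← ofReal_integral_norm_eq_lintegral_enorm (hf.integrable n)]
    refine ENNReal.ofReal_le_ofReal ?_
    have hmono := hf.setIntegral_le (Nat.zero_le n) MeasurableSet.univ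
    rw [Measure.restrict_univ] at hmono
    calc ∫ ω, ‖f n ω‖ ∂μ ≤ ∫ ω, (f n ω + 2 * |c|) ∂μ :=
          integral_mono (hf.integrable n).norm ((hf.integrable n).add (integrable_const _))
            fun ω => abs_le.2 ⟨by linarith [hc n ω, neg_abs_le c], by linarith [abs_nonneg c]⟩
      _ ≤ ∫ ω, f 0 ω ∂μ + 2 * |c| * μ.real Set.univ := by
          rw [integral_add (hf.integrable n) (integrable_const _), integral_const, smul_eq_mul]
          linarith
  filter_upwards [hf.neg.exists_ae_tendsto_of_bdd hbdd] with ω ⟨l, hl⟩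
  exact ⟨-l, by simpa using hl.neg⟩

lemma exists_le_and_stoppedProcess_eq {β : Type*} (u : ℕ → Ω → β) (τ : Ω → ℕ∞) (n : ℕ)
    (ω : Ω) : ∃ k : ℕ, (k : ℕ∞) ≤ τ ω ∧ stoppedProcess u τ n ω = u k ω := by
  rcases le_total (n : ℕ∞) (τ ω) with h | h
  · exact ⟨n, h, stoppedProcess_eq_of_le h⟩
  · obtain ⟨t, ht⟩ := WithTop.ne_top_iff_exists.1 (ne_top_of_le_ne_top (by simp) h)
    exact ⟨t, ht.le, by rw [stoppedProcess_eq_of_ge h, ← ht]; rfl⟩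

lemma sum_range_le_of_le_hittingAfter {c : ℝ} (hc : 0 ≤ c) {k : ℕ} {ω : Ω}
    (hk : (k : ℕ∞) ≤ hittingAfter (fun n ω => ∑ j ∈ range (n + 1), b j ω) (Set.Ioi c) 0 ω) :
    ∑ j ∈ range k, b j ω ≤ c := by
  cases k with
  | zero => simpa using hc
  | succ i =>
    simpa using notMem_of_lt_hittingAfter (u := fun n ω => ∑ j ∈ range (n + 1), b j ω)
      (s := Set.Ioi c) (lt_of_lt_of_le (WithTop.coe_lt_coe.2 (Nat.lt_succ_self i)) hk)
      (Nat.zero_le i)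

theorem Supermartingale.exists_ae_tendsto_of_ge_neg_sum [IsFiniteMeasure μ]
    (hf : Supermartingale f F μ) (hb : Adapted F b) (hb0 : ∀ k ω, 0 ≤ b k ω)
    (hlow : ∀ k ω, -∑ j ∈ range k, b j ω ≤ f k ω) :
    ∀ᵐ ω ∂μ, Summable (b · ω) → ∃ l, Tendsto (f · ω) atTop (𝓝 l) := by
  set S : ℕ → Ω → ℝ := fun n ω => ∑ j ∈ range (n + 1), b j ω
  have hS : Adapted F S := fun n => Finset.measurable_sum _ fun j hj =>
    (hb j).mono (F.mono (Nat.lt_succ_iff.1 (mem_range.1 hj))) le_rfl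
  set τ : ℕ → Ω → ℕ∞ := fun c => hittingAfter S (Set.Ioi (c : ℝ)) 0
  have hstopped : ∀ c : ℕ, ∀ᵐ ω ∂μ, ∃ l,
      Tendsto (MeasureTheory.stoppedProcess f (τ c) · ω) atTop (𝓝 l) :=
    fun c => (hf.stoppedProcess (hS.isStoppingTime_hittingAfter measurableSet_Ioi))
      |>.exists_ae_tendsto_of_forall_ge (c := -c) fun n ω => by
        obtain ⟨k, hk, heq⟩ := exists_le_and_stoppedProcess_eq f (τ c) n ω
        rw [heq]
        linarith [hlow k ω, sum_range_le_of_le_hittingAfter (Nat.cast_nonneg (α := ℝ) c) hk]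
  filter_upwards [ae_all_iff.2 hstopped] with ω hω hsum
  obtain ⟨c, hc⟩ := exists_nat_ge (∑' j, b j ω)
  have hτ : τ c ω = ⊤ := hittingAfter_eq_top_iff.2 fun j _ hj =>
    not_lt.2 ((hsum.sum_le_tsum _ fun i _ => hb0 i ω).trans hc) hj
  obtain ⟨l, hl⟩ := hω c
  exact ⟨l, hl.congr fun n => stoppedProcess_eq_of_le (hτ ▸ le_top)⟩

end MeasureTheory

namespace RobbinsSiegmund

noncomputable def discount (a : ℕ → ℝ) (k : ℕ) : ℝ := (∏ j ∈ range k, (1 + a j))⁻¹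

noncomputable def discountedSum (p a u : ℕ → ℝ) (k : ℕ) : ℝ :=
  discount a k * p k + ∑ j ∈ range k, discount a (j + 1) * u j

section Deterministic

variable {a : ℕ → ℝ}

lemma one_le_prod_one_add (ha : ∀ j, 0 ≤ a j) (k : ℕ) : 1 ≤ ∏ j ∈ range k, (1 + a j) :=
  one_le_prod fun j _ => le_add_of_nonneg_right (ha j)

lemma discount_pos (ha : ∀ j, 0 ≤ a j) (k : ℕ) : 0 < discount a k :=
  inv_pos.2 (zero_lt_one.trans_le (one_le_prod_one_add ha k))

lemma discount_le_one (ha : ∀ j, 0 ≤ a j) (k : ℕ) : discount a k ≤ 1 :=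
  inv_le_one_of_one_le₀ (one_le_prod_one_add ha k)

lemma discount_succ_mul (ha : ∀ j, 0 ≤ a j) (k : ℕ) :
    discount a (k + 1) * (1 + a k) = discount a k := by
  have : 1 + a k ≠ 0 := by linarith [ha k]
  rw [discount, discount, prod_range_succ, mul_inv, inv_mul_cancel_right₀ this]

lemma exists_tendsto_discount (ha : ∀ j, 0 ≤ a j) (hs : Summable a) :
    ∃ L, 0 < L ∧ Tendsto (discount a) atTop (𝓝 L) ∧ ∀ k, L ≤ discount a k := by
  set P := ∏' j, (1 + a j)
  have hP : Tendsto (fun k => ∏ j ∈ range k, (1 + a j)) atTop (𝓝 P) :=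
    (Real.multipliable_one_add_of_summable hs).hasProd.tendsto_prod_nat
  have hmono : Monotone fun k => ∏ j ∈ range k, (1 + a j) :=
    monotone_nat_of_le_succ fun k => by
      rw [prod_range_succ]
      exact le_mul_of_one_le_right (zero_le_one.trans (one_le_prod_one_add ha k))
        (le_add_of_nonneg_right (ha k))
  have hP1 : 1 ≤ P := ge_of_tendsto' hP (one_le_prod_one_add ha)
  have hP0 : 0 < P := zero_lt_one.trans_le hP1
  exact ⟨P⁻¹, inv_pos.2 hP0, hP.inv₀ hP0.ne',
    fun k => inv_anti₀ (zero_lt_one.trans_le (one_le_prod_one_add ha k))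
      (hmono.ge_of_tendsto hP k)⟩

lemma summable_of_summable_mul_of_tendsto_pos {p q : ℕ → ℝ} {P : ℝ} (hq : ∀ k, 0 ≤ q k)
    (hpP : Tendsto p atTop (𝓝 P)) (hP : 0 < P) (hqp : Summable fun k => q k * p k) :
    Summable q := by
  obtain ⟨N, hN⟩ := eventually_atTop.1 (hpP.eventually_const_lt (half_lt_self hP))
  refine (summable_nat_add_iff N).1 <| Summable.of_nonneg_of_le (fun k => hq _) (fun k => ?_)
    (((summable_nat_add_iff N).2 hqp).mul_left (2 / P))
  have := mul_le_mul_of_nonneg_left (hN (k + N) (Nat.le_add_left N k)).le (hq (k + N))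
  calc q (k + N) = 2 / P * (q (k + N) * (P / 2)) := by field_simp
    _ ≤ 2 / P * (q (k + N) * p (k + N)) := by gcongr

variable {p b q : ℕ → ℝ} {l : ℝ}

lemma summable_mul_and_exists_tendsto_of_tendsto_discountedSum (ha : ∀ j, 0 ≤ a j)
    (hp : ∀ j, 0 ≤ p j) (hb : ∀ j, 0 ≤ b j) (hq : ∀ j, 0 ≤ q j)
    (hsa : Summable a) (hsb : Summable b)
    (hY : Tendsto (discountedSum p a fun j => q j * p j - b j) atTop (𝓝 l)) :
    (Summable fun k => q k * p k) ∧ ∃ P, Tendsto p atTop (𝓝 P) := by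
  obtain ⟨L, hL0, hL, hLle⟩ := exists_tendsto_discount ha hsa
  set w : ℕ → ℝ := fun j => discount a (j + 1) * (q j * p j)
  have hw0 : ∀ j, 0 ≤ w j := fun j => mul_nonneg (discount_pos ha _).le (mul_nonneg (hq j) (hp j))
  have hdb : Summable fun j => discount a (j + 1) * b j :=
    hsb.of_nonneg_of_le (fun j => mul_nonneg (discount_pos ha _).le (hb j))
      fun j => mul_le_of_le_one_left (hb j) (discount_le_one ha _)
  -- adding back the discounted `b`'s leaves a sum of nonnegative terms
  have hU : Tendsto (fun k => discount a k * p k + ∑ j ∈ range k, w j) atTop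
      (𝓝 (l + ∑' j, discount a (j + 1) * b j)) := by
    refine (hY.add hdb.hasSum.tendsto_sum_nat).congr fun k => ?_
    simp only [discountedSum, w, add_assoc, ← sum_add_distrib]
    congr 1
    exact sum_congr rfl fun j _ => by ring
  obtain ⟨M, hM⟩ := hU.bddAbove_range
  have hw : Summable w := summable_of_sum_range_le hw0 fun k =>
    (le_add_of_nonneg_left (mul_nonneg (discount_pos ha k).le (hp k))).trans (hM ⟨k, rfl⟩)
  refine ⟨(hw.mul_left L⁻¹).of_nonneg_of_le (fun j => mul_nonneg (hq j) (hp j)) fun j => ?_, ?_⟩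
  · rw [le_inv_mul_iff₀ hL0]
    exact mul_le_mul_of_nonneg_right (hLle _) (mul_nonneg (hq j) (hp j))
  · have hαp := hU.sub hw.hasSum.tendsto_sum_nat
    simp only [add_sub_cancel_right] at hαp
    exact ⟨_, (hαp.div hL hL0.ne').congr fun k => mul_div_cancel_left₀ _ (discount_pos ha k).ne'⟩

lemma tendsto_zero_and_summable_of_tendsto_discountedSum (ha : ∀ j, 0 ≤ a j)
    (hp : ∀ j, 0 ≤ p j) (hb : ∀ j, 0 ≤ b j) (hq : ∀ j, 0 ≤ q j)
    (hsa : Summable a) (hsb : Summable b) (hq_div : ¬ Summable q)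
    (hY : Tendsto (discountedSum p a fun j => q j * p j - b j) atTop (𝓝 l)) :
    Tendsto p atTop (𝓝 0) ∧ Summable fun k => q k * p k := by
  obtain ⟨hqp, P, hP⟩ :=
    summable_mul_and_exists_tendsto_of_tendsto_discountedSum ha hp hb hq hsa hsb hY
  obtain rfl : P = 0 := by
    refine (ge_of_tendsto' hP hp).eq_or_lt.elim Eq.symm fun hP0 => ?_
    exact absurd (summable_of_summable_mul_of_tendsto_pos hq hP hP0 hqp) hq_div
  exact ⟨hP, hqp⟩

lemma neg_sum_le_discountedSum (ha : ∀ j, 0 ≤ a j) (hp : ∀ j, 0 ≤ p j) (hb : ∀ j, 0 ≤ b j)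
    (hq : ∀ j, 0 ≤ q j) (k : ℕ) :
    -∑ j ∈ range k, b j ≤ discountedSum p a (fun j => q j * p j - b j) k := by
  rw [discountedSum, ← sum_neg_distrib]
  refine le_add_of_nonneg_of_le (mul_nonneg (discount_pos ha k).le (hp k))
    (sum_le_sum fun j _ => ?_)
  have := mul_nonneg (discount_pos ha (j + 1)).le (mul_nonneg (hq j) (hp j))
  have := mul_le_of_le_one_left (hb j) (discount_le_one ha (j + 1))
  linarith [mul_sub (discount a (j + 1)) (q j * p j) (b j)]

end Deterministic

section Discounting

variable {Ω : Type*} {m0 : MeasurableSpace Ω} {μ : Measure Ω} {F : Filtration ℕ m0}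
  {p a u : ℕ → Ω → ℝ}

noncomputable def discountedProcess (p a u : ℕ → Ω → ℝ) (k : ℕ) (ω : Ω) : ℝ :=
  discountedSum (p · ω) (a · ω) (u · ω) k

lemma measurable_discount (ha : Adapted F a) {k n : ℕ} (hn : n ≤ k + 1) :
    Measurable[F k] fun ω => discount (a · ω) n :=
  (Finset.measurable_prod _ fun j hj =>
    measurable_const.add ((ha j).mono (F.mono (by have := mem_range.1 hj; omega)) le_rfl)).inv

lemma measurable_sum_discount_mul (ha : Adapted F a) (hu : Adapted F u) {k n : ℕ}
    (hn : n ≤ k + 1) :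
    Measurable[F k] fun ω => ∑ j ∈ range n, discount (a · ω) (j + 1) * u j ω :=
  Finset.measurable_sum _ fun j hj => by
    have := mem_range.1 hj
    exact (measurable_discount ha (by omega)).mul ((hu j).mono (F.mono (by omega)) le_rfl)

lemma adapted_discountedProcess (hp : Adapted F p) (ha : Adapted F a) (hu : Adapted F u) :
    Adapted F (discountedProcess p a u) := fun k =>
  ((measurable_discount ha k.le_succ).mul (hp k)).add
    (measurable_sum_discount_mul ha hu k.le_succ)

lemma norm_discount_le_one {a : ℕ → ℝ} (ha : ∀ j, 0 ≤ a j) (n : ℕ) : ‖discount a n‖ ≤ 1 := by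
  rw [Real.norm_of_nonneg (discount_pos ha n).le]
  exact discount_le_one ha n

lemma integrable_discount_mul (ha : Adapted F a) (ha0 : ∀ k ω, 0 ≤ a k ω) {g : Ω → ℝ}
    (hg : Integrable g μ) (n : ℕ) : Integrable (fun ω => discount (a · ω) n * g ω) μ :=
  hg.bdd_mul ((measurable_discount ha n.le_succ).mono (F.le n) le_rfl).aestronglyMeasurable
    (ae_of_all _ fun ω => norm_discount_le_one (ha0 · ω) n)

lemma integrable_sum_discount_mul (ha : Adapted F a) (ha0 : ∀ k ω, 0 ≤ a k ω)
    (hu : ∀ k, Integrable (u k) μ) (n : ℕ) :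
    Integrable (fun ω => ∑ j ∈ range n, discount (a · ω) (j + 1) * u j ω) μ :=
  integrable_finsetSum _ fun j _ => integrable_discount_mul ha ha0 (hu j) (j + 1)

lemma integrable_discountedProcess (ha : Adapted F a) (ha0 : ∀ k ω, 0 ≤ a k ω)
    (hp : ∀ k, Integrable (p k) μ) (hu : ∀ k, Integrable (u k) μ) (k : ℕ) :
    Integrable (discountedProcess p a u k) μ :=
  (integrable_discount_mul ha ha0 (hp k) k).add (integrable_sum_discount_mul ha ha0 hu k)

theorem supermartingale_discountedProcess [IsFiniteMeasure μ] (hp : Adapted F p)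
    (ha : Adapted F a) (hu : Adapted F u) (ha0 : ∀ k ω, 0 ≤ a k ω)
    (hp_int : ∀ k, Integrable (p k) μ) (hu_int : ∀ k, Integrable (u k) μ)
    (hrec : ∀ k, ∀ᵐ ω ∂μ, μ[p (k + 1)|F k] ω ≤ (1 + a k ω) * p k ω - u k ω) :
    Supermartingale (discountedProcess p a u) F μ := by
  refine supermartingale_nat (fun k => (adapted_discountedProcess hp ha hu k).stronglyMeasurable)
    (integrable_discountedProcess ha ha0 hp_int hu_int) fun k => ?_
  set α : Ω → ℝ := fun ω => discount (a · ω) (k + 1)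
  set C : Ω → ℝ := fun ω => ∑ j ∈ range (k + 1), discount (a · ω) (j + 1) * u j ω
  have hsplit : discountedProcess p a u (k + 1) = α * p (k + 1) + C := rfl
  have hα : StronglyMeasurable[F k] α := (measurable_discount ha le_rfl).stronglyMeasurable
  have hC : μ[C|F k] = C := condExp_of_stronglyMeasurable (F.le k)
    (measurable_sum_discount_mul ha hu le_rfl).stronglyMeasurable
    (integrable_sum_discount_mul ha ha0 hu_int _)
  have hpull : μ[α * p (k + 1)|F k] =ᵐ[μ] α * μ[p (k + 1)|F k] :=
    condExp_stronglyMeasurable_mul_of_bound (F.le k) hα (hp_int (k + 1)) 1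
      (ae_of_all _ fun ω => norm_discount_le_one (ha0 · ω) _)
  have hadd : μ[discountedProcess p a u (k + 1)|F k] =ᵐ[μ] μ[α * p (k + 1)|F k] + μ[C|F k] := by
    rw [hsplit]
    exact condExp_add (integrable_discount_mul ha ha0 (hp_int _) _)
      (integrable_sum_discount_mul ha ha0 hu_int _) _
  filter_upwards [hadd, hpull, hrec k] with ω hadd hpull hrec
  rw [hadd, Pi.add_apply, hpull, hC, Pi.mul_apply]
  calc α ω * μ[p (k + 1)|F k] ω + C ω ≤ α ω * ((1 + a k ω) * p k ω - u k ω) + C ω := by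
        gcongr
        exact (discount_pos (ha0 · ω) _).le
    _ = discountedProcess p a u k ω := by
        simp only [α, C, discountedProcess, discountedSum, sum_range_succ]
        rw [← discount_succ_mul (ha0 · ω) k]
        ring

end Discounting

end RobbinsSiegmund

open RobbinsSiegmund

theorem robbins_siegmund_with_divergent_q_general
    {Ω : Type*} {m0 : MeasurableSpace Ω} (μ : Measure Ω) [IsProbabilityMeasure μ]
    (F : Filtration ℕ m0)
    (p a b : ℕ → Ω → ℝ) (q : ℕ → ℝ)
    (hp_adapted : Adapted F p) (ha_adapted : Adapted F a) (hb_adapted : Adapted F b)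
    (hp_nonneg : ∀ k ω, 0 ≤ p k ω) (ha_nonneg : ∀ k ω, 0 ≤ a k ω)
    (hb_nonneg : ∀ k ω, 0 ≤ b k ω) (hq_nonneg : ∀ k, 0 ≤ q k)
    (hp_int : ∀ k, Integrable (p k) μ)
    (hb_int : ∀ k, Integrable (b k) μ)
    (ha_sum : ∀ᵐ ω ∂μ, Summable fun k => a k ω)
    (hq_div : ¬ Summable q)
    (hb_sum : ∀ᵐ ω ∂μ, Summable fun k => b k ω)
    (hrec : ∀ k : ℕ, ∀ᵐ ω ∂μ,
      (μ[p (k + 1)|F k]) ω ≤ (1 + a k ω - q k) * p k ω + b k ω) :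
    ∀ᵐ ω ∂μ, Tendsto (fun k => p k ω) atTop (nhds 0) ∧
      Summable fun k => q k * p k ω := by
  have hY : Supermartingale (discountedProcess p a fun k ω => q k * p k ω - b k ω) F μ :=
    supermartingale_discountedProcess hp_adapted ha_adapted
      (fun k => (measurable_const.mul (hp_adapted k)).sub (hb_adapted k)) ha_nonneg hp_int
      (fun k => ((hp_int k).const_mul (q k)).sub (hb_int k))
      fun k => (hrec k).mono fun ω h => h.trans_eq (by ring)
  have hconv := hY.exists_ae_tendsto_of_ge_neg_sum hb_adapted hb_nonneg fun k ω =>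
    neg_sum_le_discountedSum (ha_nonneg · ω) (hp_nonneg · ω) (hb_nonneg · ω) hq_nonneg k
  filter_upwards [ha_sum, hb_sum, hconv] with ω hsa hsb hconv
  obtain ⟨l, hl⟩ := hconv hsb
  exact tendsto_zero_and_summable_of_tendsto_discountedSum (ha_nonneg · ω) (hp_nonneg · ω)
    (hb_nonneg · ω) hq_nonneg hsa hsb hq_div hl

/-- Robbins–Siegmund-type lemma. If nonnegative adapted integrable
sequences `p, a, b` and a deterministic nonnegative sequence `q` satisfy
`∑ a_k < ∞` a.s., `∑ q_k = ∞`, `∑ b_k < ∞` a.s., and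
`E[p_{k+1} | F_k] ≤ (1 + a_k - q_k) p_k + b_k` a.s. for all `k`, then almost surely
`p_k → 0` and `∑ q_k p_k < ∞`. -/
theorem robbins_siegmund_with_divergent_q
    {Ω : Type*} {m0 : MeasurableSpace Ω} (μ : Measure Ω) [IsProbabilityMeasure μ]
    (F : Filtration ℕ m0)
    (p a b : ℕ → Ω → ℝ) (q : ℕ → ℝ)
    (hp_adapted : Adapted F p) (ha_adapted : Adapted F a) (hb_adapted : Adapted F b)
    (hp_nonneg : ∀ k ω, 0 ≤ p k ω) (ha_nonneg : ∀ k ω, 0 ≤ a k ω)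
    (hb_nonneg : ∀ k ω, 0 ≤ b k ω) (hq_nonneg : ∀ k, 0 ≤ q k)
    (hp_int : ∀ k, Integrable (p k) μ) (ha_int : ∀ k, Integrable (a k) μ)
    (hb_int : ∀ k, Integrable (b k) μ)
    (ha_sum : ∀ᵐ ω ∂μ, Summable fun k => a k ω)
    (hq_div : ¬ Summable q)
    (hb_sum : ∀ᵐ ω ∂μ, Summable fun k => b k ω)
    (hrec : ∀ k : ℕ, ∀ᵐ ω ∂μ,
      (μ[p (k + 1)|F k]) ω ≤ (1 + a k ω - q k) * p k ω + b k ω) :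
    ∀ᵐ ω ∂μ, Tendsto (fun k => p k ω) atTop (nhds 0) ∧
      Summable fun k => q k * p k ω :=
  robbins_siegmund_with_divergent_q_general μ F p a b q hp_adapted ha_adapted hb_adapted hp_nonneg
    ha_nonneg hb_nonneg hq_nonneg hp_int hb_int ha_sum hq_div hb_sum hrec
end

section
/- Let g : ℝ^d → ℝ be l_g-Lipschitz and bounded with |g(z)| ≤ C_g for all z. Let Λ̄ ≥ 0, let λ, λ* ∈ [0, Λ̄], let y, x̄ ∈ ℝ^d, let γ > 0, and set λ⁺ = Π_{[0,Λ̄]}(λ + γ g(y)), the projection of λ + γ g(y) onto the interval [0, Λ̄]. Then (λ⁺ − λ*)² ≤ (λ − λ*)² + 2γ l_g |λ − λ*| · ‖y − x̄‖ + γ² C_g² + 2γ(λ − λ*) g(x̄). -/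
/-!
Projection onto `[0, Λ̄]` fixes `λ*` and is nonexpansive, so `(λ⁺ - λ*)² ≤ (λ + γ g(y) - λ*)²`.
Expanding the square and writing `g(y) = g(x̄) + (g(y) - g(x̄))`, the cross term is controlled
by the Lipschitz bound and the quadratic term by `|g(y)| ≤ C_g`.
-/

section Clamp

variable {α : Type*} [AddCommGroup α] [LinearOrder α] [IsOrderedAddMonoid α]

theorem abs_max_min_sub_le_abs_sub {lo hi c : α} (hc : c ∈ Set.Icc lo hi) (a : α) :
    |max lo (min hi a) - c| ≤ |a - c| :=
  calc |max lo (min hi a) - c| = |max lo (min hi a) - max lo (min hi c)| := by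
        rw [min_eq_right hc.2, max_eq_right hc.1]
    _ ≤ max |lo - lo| |min hi a - min hi c| := abs_max_sub_max_le_max _ _ _ _
    _ = |min hi a - min hi c| := by simp
    _ ≤ max |hi - hi| |a - c| := abs_min_sub_min_le_max _ _ _ _
    _ = |a - c| := by simp

end Clamp

theorem sq_max_min_sub_le_sq_sub {lo hi c : ℝ} (hc : c ∈ Set.Icc lo hi) (a : ℝ) :
    (max lo (min hi a) - c) ^ 2 ≤ (a - c) ^ 2 :=
  sq_le_sq.2 (abs_max_min_sub_le_abs_sub hc a)

theorem LipschitzWith.mul_sub_le_abs_mul_dist {X : Type*} [PseudoMetricSpace X] {K : NNReal}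
    {f : X → ℝ} (hf : LipschitzWith K f) (t : ℝ) (x y : X) :
    t * (f x - f y) ≤ |t| * (K * dist x y) :=
  calc t * (f x - f y) ≤ |t| * |f x - f y| := by rw [← abs_mul]; exact le_abs_self _
    _ ≤ |t| * (K * dist x y) := by
        gcongr
        rw [← Real.dist_eq]
        exact hf.dist_le_mul x y

theorem dual_step_inequality_general {d : ℕ}
    (g : EuclideanSpace ℝ (Fin d) → ℝ) (lg : NNReal) (Cg : ℝ)
    (hglip : LipschitzWith lg g) (hgbd : ∀ z, |g z| ≤ Cg)
    (Λbar : ℝ)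
    (lam lamstar : ℝ) (hlamstar : lamstar ∈ Set.Icc 0 Λbar)
    (y xbar : EuclideanSpace ℝ (Fin d)) (γ : ℝ) (hγ : 0 < γ) :
    (max 0 (min Λbar (lam + γ * g y)) - lamstar) ^ 2 ≤
      (lam - lamstar) ^ 2 + 2 * γ * lg * |lam - lamstar| * ‖y - xbar‖
        + γ ^ 2 * Cg ^ 2 + 2 * γ * (lam - lamstar) * g xbar := by
  have hcross := hglip.mul_sub_le_abs_mul_dist (lam - lamstar) y xbar
  rw [dist_eq_norm] at hcross
  have hsq : g y ^ 2 ≤ Cg ^ 2 := sq_le_sq.2 ((hgbd y).trans (le_abs_self _))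
  calc (max 0 (min Λbar (lam + γ * g y)) - lamstar) ^ 2
      ≤ (lam + γ * g y - lamstar) ^ 2 := sq_max_min_sub_le_sq_sub hlamstar _
    _ = (lam - lamstar) ^ 2 + 2 * γ * ((lam - lamstar) * (g y - g xbar))
          + γ ^ 2 * g y ^ 2 + 2 * γ * (lam - lamstar) * g xbar := by ring
    _ ≤ (lam - lamstar) ^ 2 + 2 * γ * (|lam - lamstar| * (lg * ‖y - xbar‖))
          + γ ^ 2 * Cg ^ 2 + 2 * γ * (lam - lamstar) * g xbar := by gcongr
    _ = _ := by ring

/-- One dual (clamped-gradient-ascent) step inequality: with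
`λ⁺ = Π_{[0,Λ̄]}(λ + γ g(y))` for an `l_g`-Lipschitz function `g` bounded by `C_g`,
and `λ, λ* ∈ [0, Λ̄]`,
`(λ⁺ - λ*)² ≤ (λ - λ*)² + 2γ l_g |λ - λ*| ‖y - x̄‖ + γ² C_g² + 2γ(λ - λ*) g(x̄)`. -/
theorem dual_step_inequality {d : ℕ}
    (g : EuclideanSpace ℝ (Fin d) → ℝ) (lg : NNReal) (Cg : ℝ)
    (hglip : LipschitzWith lg g) (hgbd : ∀ z, |g z| ≤ Cg)
    (Λbar : ℝ) (hΛ : 0 ≤ Λbar)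
    (lam lamstar : ℝ) (hlam : lam ∈ Set.Icc 0 Λbar) (hlamstar : lamstar ∈ Set.Icc 0 Λbar)
    (y xbar : EuclideanSpace ℝ (Fin d)) (γ : ℝ) (hγ : 0 < γ) :
    (max 0 (min Λbar (lam + γ * g y)) - lamstar) ^ 2 ≤
      (lam - lamstar) ^ 2 + 2 * γ * lg * |lam - lamstar| * ‖y - xbar‖
        + γ ^ 2 * Cg ^ 2 + 2 * γ * (lam - lamstar) * g xbar :=
  dual_step_inequality_general g lg Cg hglip hgbd Λbar lam lamstar hlamstar y xbar γ hγ
end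

section
/- Let θ > 0 and for x ∈ ℝ let μ_x denote the law of the element-wise stochastic quantizer with scale θ applied to x, i.e., the probability measure on ℝ assigning mass max(0, 1 − |x − q|/θ) to each point q ∈ θℤ. Then for all x, x' ∈ ℝ, the total variation distance between μ_x and μ_{x'} is at most |x − x'|/θ; in particular, for every set O ⊆ θℤ of output values, μ_x(O) ≤ μ_{x'}(O) + |x − x'|/θ, so a single quantization step is (0, δ)-differentially private with δ = |x − x'|/θ. -/
/-!
Write `u = x / θ`. The quantizer applied to `x` has the law of `⌈t⌉ θ` for `t` uniform on
`(u - 1, u]`: the mass at `mθ` is the length of `(u - 1, u] ∩ (m - 1, m]`, which is the tent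
`max 0 (1 - |u - m|)`. Feeding the same `t` to the quantizers of `x` and `x'` couples them, and
the two outputs can differ only for `t ∈ (u - 1, u] \ (u' - 1, u']`, a set of length at most
`|u - u'| = |x - x'| / θ`.
-/

open MeasureTheory

/-- The law of the element-wise stochastic quantizer with scale `θ` applied to input `x`:
the probability measure on `ℝ` assigning mass `max 0 (1 - |x - q|/θ)` to each
quantization level `q = mθ`, `m ∈ ℤ`. -/
noncomputable def quantizerLaw (θ x : ℝ) : Measure ℝ :=
  Measure.sum fun m : ℤ =>
    ENNReal.ofReal (max 0 (1 - |x - (m : ℝ) * θ| / θ)) • Measure.dirac ((m : ℝ) * θ)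

open Set

lemma MeasureTheory.Measure.map_restrict_apply_le_add_diff {α β : Type*} [MeasurableSpace α]
    [MeasurableSpace β] (μ : Measure α) {f : α → β} (hf : Measurable f) (A B : Set α) {O : Set β}
    (hO : MeasurableSet O) :
    (μ.restrict A).map f O ≤ (μ.restrict B).map f O + μ (A \ B) := by
  rw [Measure.map_apply hf hO, Measure.map_apply hf hO]
  calc μ.restrict A (f ⁻¹' O) ≤ μ.restrict (B ∪ A \ B) (f ⁻¹' O) :=
        Measure.restrict_mono le_sup_sdiff le_rfl _
    _ ≤ μ.restrict B (f ⁻¹' O) + μ.restrict (A \ B) (f ⁻¹' O) := Measure.restrict_union_le _ _ _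
    _ ≤ μ.restrict B (f ⁻¹' O) + μ (A \ B) := add_le_add le_rfl
        ((measure_mono (subset_univ _)).trans_eq (Measure.restrict_apply_univ _))

lemma Real.volume_Ioc_sub_inter_Ioc_sub (a u v : ℝ) :
    volume (Ioc (u - a) u ∩ Ioc (v - a) v) = ENNReal.ofReal (a - |u - v|) := by
  rw [Ioc_inter_Ioc, Real.volume_Ioc, max_sub_sub_right, ← max_sub_min_eq_abs']
  ring_nf

lemma Real.volume_Ioc_sub_diff_Ioc_sub_le (a u v : ℝ) :
    volume (Ioc (u - a) u \ Ioc (v - a) v) ≤ ENNReal.ofReal |u - v| := by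
  rcases le_total u v with huv | hvu
  · calc volume (Ioc (u - a) u \ Ioc (v - a) v) ≤ volume (Ioc (u - a) (v - a)) :=
          measure_mono fun _ ⟨⟨hut, _⟩, ht⟩ => ⟨hut, not_lt.1 fun h => ht ⟨h, by linarith⟩⟩
      _ = ENNReal.ofReal |u - v| := by
          rw [Real.volume_Ioc, abs_of_nonpos (by linarith)]; ring_nf
  · calc volume (Ioc (u - a) u \ Ioc (v - a) v) ≤ volume (Ioc v u) :=
          measure_mono fun _ ⟨⟨_, htu⟩, ht⟩ => ⟨not_le.1 fun h => ht ⟨by linarith, h⟩, htu⟩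
      _ = ENNReal.ofReal |u - v| := by rw [Real.volume_Ioc, abs_of_nonneg (by linarith)]

lemma abs_sub_mul_div_eq {θ : ℝ} (hθ : 0 < θ) (x y : ℝ) : |x - y * θ| / θ = |x / θ - y| := by
  rw [show x - y * θ = (x / θ - y) * θ by field_simp, abs_mul, abs_of_pos hθ,
    mul_div_cancel_right₀ _ hθ.ne']

lemma quantizerLaw_eq_map_ceil {θ : ℝ} (hθ : 0 < θ) (x : ℝ) :
    quantizerLaw θ x =
      (volume.restrict (Ioc (x / θ - 1) (x / θ))).map fun t => (⌈t⌉ : ℝ) * θ := by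
  set μ := volume.restrict (Ioc (x / θ - 1) (x / θ))
  have hweight (m : ℤ) :
      ENNReal.ofReal (max 0 (1 - |x - m * θ| / θ)) = μ.map Int.ceil {m} := by
    rw [Measure.map_apply Int.measurable_ceil (measurableSet_singleton m),
      Measure.restrict_apply (Int.measurable_ceil (measurableSet_singleton m)),
      Int.preimage_ceil_singleton, inter_comm, Real.volume_Ioc_sub_inter_Ioc_sub,
      abs_sub_mul_div_eq hθ x m, ENNReal.ofReal_max, ENNReal.ofReal_zero, zero_max]
  have hmul : Measurable fun m : ℤ => (m : ℝ) * θ := measurable_from_top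
  calc quantizerLaw θ x = (Measure.sum fun m : ℤ => μ.map Int.ceil {m} • Measure.dirac m).map
        fun m : ℤ => (m : ℝ) * θ := by
        rw [Measure.map_sum hmul.aemeasurable]
        simp only [Measure.map_smul, Measure.map_dirac' hmul, ← hweight]
        rfl
    _ = _ := by
        rw [Measure.sum_smul_dirac, Measure.map_map hmul Int.measurable_ceil]
        rfl

lemma quantizerLaw_apply_le_add {θ : ℝ} (hθ : 0 < θ) (x x' : ℝ) {O : Set ℝ}
    (hO : MeasurableSet O) :
    quantizerLaw θ x O ≤ quantizerLaw θ x' O + ENNReal.ofReal (|x - x'| / θ) := by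
  have hquant : Measurable fun t : ℝ => (⌈t⌉ : ℝ) * θ :=
    (measurable_from_top.comp Int.measurable_ceil).mul_const θ
  have hshift : |x - x'| / θ = |x / θ - x' / θ| := by rw [← sub_div, abs_div, abs_of_pos hθ]
  rw [quantizerLaw_eq_map_ceil hθ, quantizerLaw_eq_map_ceil hθ, hshift]
  exact (Measure.map_restrict_apply_le_add_diff _ hquant _ _ hO).trans
    (add_le_add le_rfl (Real.volume_Ioc_sub_diff_Ioc_sub_le _ _ _))

/-- The total variation distance between the quantizer laws for inputs
`x` and `x'` is at most `|x - x'|/θ`: for every measurable observation set `O`,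
`μ_x(O) ≤ μ_{x'}(O) + |x - x'|/θ`, and likewise for every set `O ⊆ θℤ` of output values.
Hence a single quantization step is `(0, δ)`-differentially private with
`δ = |x - x'|/θ`. -/
theorem quantizer_differential_privacy (θ : ℝ) (hθ : 0 < θ) (x x' : ℝ) :
    (∀ O : Set ℝ, MeasurableSet O →
      quantizerLaw θ x O ≤ quantizerLaw θ x' O + ENNReal.ofReal (|x - x'| / θ)) ∧
    (∀ O : Set ℝ, O ⊆ {y | ∃ m : ℤ, y = (m : ℝ) * θ} →
      quantizerLaw θ x O ≤ quantizerLaw θ x' O + ENNReal.ofReal (|x - x'| / θ)) := by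
  refine ⟨fun O hO => quantizerLaw_apply_le_add hθ x x' hO, fun O hO => ?_⟩
  have hcountable : O.Countable := (countable_range fun m : ℤ => (m : ℝ) * θ).mono
    fun _ hy => (hO hy).imp fun _ hm => hm.symm
  exact quantizerLaw_apply_le_add hθ x x' hcountable.measurableSet
end
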